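/- arXiv:1502.01617 — 2 statements merged into one kernel-verified Lean document; each statement's English description precedes it below -/
import Mathlib

section
/- Let θ₁ ∈ ℝ, z₁ = e^{iθ₁}, and w_δ(z) = 1/(2π) − (1/π)·z/(z−z₁) for |z| < 1. Then for every real ρ with 0 ≤ ρ < 1, the integral over the circle of radius ρ of the real part equals one: ∫_{-π}^{π} Re[w_δ(ρ e^{iθ})] dθ = 1. -/
/-!
`w_δ` is holomorphic off `z₁`, hence on a neighbourhood of the closed disc of radius `ρ < |z₁|`.
By the mean value property the average of `Re w_δ` over the circle of radius `ρ` is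
`Re w_δ(0) = 1/(2π)`, and the integral over one period `[-π, π]` is `2π` times that average.
-/

open MeasureTheory Real Complex Metric

theorem integral_Icc_neg_pi_pi_circleMap {E : Type*} [NormedAddCommGroup E] [NormedSpace ℝ E]
    (f : ℂ → E) (c : ℂ) (R : ℝ) :
    ∫ θ in Set.Icc (-π) π, f (circleMap c R θ) = (2 * π) • circleAverage f c R := by
  have hperiodic : Function.Periodic (fun θ ↦ f (circleMap c R θ)) (2 * π) :=
    fun θ ↦ by simp [periodic_circleMap c R θ]
  rw [circleAverage_def, smul_inv_smul₀ two_pi_pos.ne', integral_Icc_eq_integral_Ioc,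
    ← intervalIntegral.integral_of_le (by linarith [pi_pos])]
  simpa [show -π + 2 * π = π by ring] using hperiodic.intervalIntegral_add_eq (-π) 0

theorem DiffContOnCl.circleAverage_re {f : ℂ → ℂ} {c : ℂ} {R : ℝ}
    (hf : DiffContOnCl ℂ f (ball c |R|)) :
    Real.circleAverage (fun z ↦ (f z).re) c R = (f c).re := by
  have hint : CircleIntegrable f c R :=
    (hf.continuousOn_ball.mono sphere_subset_closedBall).circleIntegrable'
  rw [← hf.circleAverage]
  exact reCLM.circleAverage_comp_comm hint

/-- The paper's `w_δ`, the inner analytic function of the Dirac delta at `z₁`. -/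
noncomputable def diracInnerFunction (z₁ z : ℂ) : ℂ :=
  1 / (2 * (π : ℂ)) - (1 / (π : ℂ)) * z / (z - z₁)

theorem differentiableOn_diracInnerFunction (z₁ : ℂ) :
    DifferentiableOn ℂ (diracInnerFunction z₁) {z₁}ᶜ := by
  intro z hz
  have : z - z₁ ≠ 0 := sub_ne_zero.mpr hz
  unfold diracInnerFunction
  fun_prop (disch := assumption)

theorem diracInnerFunction_zero (z₁ : ℂ) : diracInnerFunction z₁ 0 = 1 / (2 * π) := by
  simp [diracInnerFunction]

theorem circleAverage_re_diracInnerFunction {z₁ : ℂ} {R : ℝ} (hR : |R| < ‖z₁‖) :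
    Real.circleAverage (fun z ↦ (diracInnerFunction z₁ z).re) 0 R = 1 / (2 * π) := by
  have hball : closedBall 0 |R| ⊆ {z₁}ᶜ := fun z hz (hzz : z = z₁) ↦ by
    rw [mem_closedBall_zero_iff, hzz] at hz
    exact hz.not_gt hR
  rw [((differentiableOn_diracInnerFunction z₁).diffContOnCl_ball hball).circleAverage_re,
    diracInnerFunction_zero]
  norm_cast

/-- For `z₁ = e^{iθ₁}` and `w_δ(z) = 1/(2π) - (1/π) z/(z - z₁)`, the integral of the
real part of `w_δ` over the circle of radius `ρ < 1` equals `1`. -/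
theorem stmt16 (θ₁ : ℝ) (z₁ : ℂ) (hz₁ : z₁ = Complex.exp (θ₁ * Complex.I)) :
    ∀ ρ : ℝ, 0 ≤ ρ → ρ < 1 →
      ∫ θ in Set.Icc (-π) π,
        (1 / (2 * (π : ℂ)) - (1 / (π : ℂ)) * ((ρ : ℂ) * Complex.exp (θ * Complex.I))
          / ((ρ : ℂ) * Complex.exp (θ * Complex.I) - z₁)).re = 1 := by
  intro ρ hρ0 hρ1
  have hρ : |ρ| < ‖z₁‖ := by
    rwa [hz₁, norm_exp_ofReal_mul_I, abs_of_nonneg hρ0]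
  calc _ = ∫ θ in Set.Icc (-π) π, (diracInnerFunction z₁ (circleMap 0 ρ θ)).re := by
        simp only [circleMap_zero, diracInnerFunction]
    _ = 1 := by
        rw [integral_Icc_neg_pi_pi_circleMap (fun z ↦ (diracInnerFunction z₁ z).re),
          circleAverage_re_diracInnerFunction hρ, smul_eq_mul]
        field_simp
end

section
/- Let θ₁ ∈ ℝ, z₁ = e^{iθ₁}, and w_δ(z) = 1/(2π) − (1/π)·z/(z−z₁) for |z| < 1. Then for every real θ with e^{iθ} ≠ e^{iθ₁} (i.e. θ not congruent to θ₁ modulo 2π), the radial boundary limit of the real part vanishes: lim_{ρ→1⁻} Re[w_δ(ρ e^{iθ})] = 0. -/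
/-!
On the unit circle `conj z = z⁻¹`, so for unit `a ≠ b` the conjugate of `a / (a - b)` is
`b / (b - a)`; the two add up to `1`, hence `Re (a / (a - b)) = 1 / 2`. Thus `w_δ` has real part
`1/(2π) - (1/π)·(1/2) = 0` at every boundary point `e^{iθ} ≠ z₁`, and `w_δ` is continuous there,
so the radial limit is this boundary value.
-/

open Real Filter Topology ComplexConjugate

namespace Complex

lemma re_div_sub_of_norm_eq_one {a b : ℂ} (ha : ‖a‖ = 1) (hb : ‖b‖ = 1) (hab : a ≠ b) :
    (a / (a - b)).re = 1 / 2 := by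
  have ha0 : a ≠ 0 := norm_ne_zero_iff.mp (by simp [ha])
  have hb0 : b ≠ 0 := norm_ne_zero_iff.mp (by simp [hb])
  have hsum : a / (a - b) + conj (a / (a - b)) = 1 := by
    rw [map_div₀, map_sub, ← inv_eq_conj ha, ← inv_eq_conj hb]
    field_simp
    ring
  have := congrArg re hsum
  rw [add_conj] at this
  simp only [ofReal_re, one_re] at this
  linarith

end Complex

/-- The inner analytic function `w_δ` of the Dirac delta at `z₁`. -/
noncomputable def innerDelta (z₁ z : ℂ) : ℂ :=
  1 / (2 * (π : ℂ)) - (1 / (π : ℂ)) * z / (z - z₁)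

lemma re_innerDelta_of_norm_eq_one {z₁ z : ℂ} (hz₁ : ‖z₁‖ = 1) (hz : ‖z‖ = 1) (hne : z ≠ z₁) :
    (innerDelta z₁ z).re = 0 := by
  have hre := Complex.re_div_sub_of_norm_eq_one hz hz₁ hne
  have hπ : (1 / (π : ℂ)) = ((1 / π : ℝ) : ℂ) := by push_cast; rfl
  have h2π : (1 / (2 * (π : ℂ))) = ((1 / (2 * π) : ℝ) : ℂ) := by push_cast; rfl
  rw [innerDelta, mul_div_assoc, hπ, h2π, Complex.sub_re, Complex.ofReal_re,
    Complex.re_ofReal_mul, hre]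
  field_simp
  ring

lemma tendsto_innerDelta_radial {z₁ z : ℂ} (hne : z ≠ z₁) :
    Tendsto (fun ρ : ℝ => innerDelta z₁ (ρ * z)) (𝓝 1) (𝓝 (innerDelta z₁ z)) := by
  have hcont : ContinuousAt (fun ρ : ℝ => innerDelta z₁ (ρ * z)) 1 := by
    unfold innerDelta
    refine continuousAt_const.sub (ContinuousAt.div (by fun_prop) (by fun_prop) ?_)
    simpa using sub_ne_zero.mpr hne
  simpa using hcont.tendsto

/-- For `z₁ = e^{iθ₁}` and `w_δ(z) = 1/(2π) - (1/π) z/(z - z₁)`, at every angle `θ`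
with `e^{iθ} ≠ e^{iθ₁}` the radial boundary limit of the real part of `w_δ`
vanishes: `Re[w_δ(ρ e^{iθ})] → 0` as `ρ → 1⁻`. -/
theorem stmt17 (θ₁ : ℝ) (z₁ : ℂ) (hz₁ : z₁ = Complex.exp (θ₁ * Complex.I))
    (θ : ℝ) (hθ : Complex.exp (θ * Complex.I) ≠ Complex.exp (θ₁ * Complex.I)) :
    Tendsto (fun ρ : ℝ =>
        (1 / (2 * (π : ℂ)) - (1 / (π : ℂ)) * ((ρ : ℂ) * Complex.exp (θ * Complex.I))
          / ((ρ : ℂ) * Complex.exp (θ * Complex.I) - z₁)).re)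
      (nhdsWithin 1 (Set.Iio 1)) (𝓝 0) := by
  subst hz₁
  have hboundary := re_innerDelta_of_norm_eq_one (Complex.norm_exp_ofReal_mul_I θ₁)
    (Complex.norm_exp_ofReal_mul_I θ) hθ
  have hradial := (Complex.continuous_re.tendsto _).comp (tendsto_innerDelta_radial hθ)
  rw [hboundary] at hradial
  exact tendsto_nhdsWithin_of_tendsto_nhds hradial
end
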